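/- The first characteristic field of the liquid–gas model is genuinely nonlinear: with λ₁(m,n,u) = u − √(kγ(m+n)^{γ−1}) and eigenvector r₁ = (m, n, −√(kγ(m+n)^{γ−1})), one has ∇λ₁ · r₁ = −((γ+1)/2)·√(kγ(m+n)^{γ−1}) < 0 for all m, n > 0. -/

import Mathlib

/-! Writing `c(s) = √(kγ s^(γ-1))` we have `λ₁(m, n, u) = u - c(m + n)` and `c'(s) = ((γ-1)/2) c(s) / s`,
so along `r₁ = (m, n, -c)` the derivative is `-c - c'(m+n)·(m+n) = -c - ((γ-1)/2) c = -((γ+1)/2) c`,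
which is negative since `c > 0`. -/

open Real

theorem hasDerivAt_sqrt_mul_rpow {a p x : ℝ} (ha : 0 ≤ a) (hx : 0 < x) :
    HasDerivAt (fun y : ℝ => √(a * y ^ p)) (p / 2 * √(a * x ^ p) / x) x := by
  have sqrt_eq : ∀ y : ℝ, 0 < y → √(a * y ^ p) = √a * y ^ (p / 2) := fun y hy => by
    rw [sqrt_mul ha, sqrt_eq_rpow (y ^ p), ← rpow_mul hy.le]
    ring_nf
  have hd := ((hasDerivAt_rpow_const (p := p / 2) (Or.inl hx.ne')).const_mul √a).congr_of_eventuallyEq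
    (Filter.eventually_of_mem (Ioi_mem_nhds hx) fun y hy => sqrt_eq y hy)
  refine hd.congr_deriv ?_
  rw [sqrt_eq x hx, rpow_sub hx, rpow_one]
  field_simp

theorem fderiv_sub_comp_add_apply {h : ℝ → ℝ} {h' m n u : ℝ} (hh : HasDerivAt h h' (m + n))
    (a b c : ℝ) :
    fderiv ℝ (fun w : ℝ × ℝ × ℝ => w.2.2 - h (w.1 + w.2.1)) (m, n, u) (a, b, c)
      = c - h' * (a + b) := by
  have hsum : HasFDerivAt (fun w : ℝ × ℝ × ℝ => w.1 + w.2.1) _ (m, n, u) :=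
    hasFDerivAt_fst.add (hasFDerivAt_snd (𝕜 := ℝ)).fst
  have hlast : HasFDerivAt (fun w : ℝ × ℝ × ℝ => w.2.2) _ (m, n, u) :=
    (hasFDerivAt_snd (𝕜 := ℝ)).snd
  have hlam : HasFDerivAt (fun w : ℝ × ℝ × ℝ => w.2.2 - h (w.1 + w.2.1)) _ (m, n, u) :=
    hlast.sub (hh.comp_hasFDerivAt (m, n, u) hsum)
  rw [hlam.fderiv]
  simp only [sub_apply, add_apply, smul_apply, ContinuousLinearMap.comp_apply,
    ContinuousLinearMap.coe_fst', ContinuousLinearMap.coe_snd', smul_eq_mul]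

/-- Genuine nonlinearity of the first field: with
`λ₁(m,n,u) = u − √(kγ(m+n)^{γ−1})` and `r₁ = (m, n, −√(kγ(m+n)^{γ−1}))`,
one has `∇λ₁ · r₁ = −((γ+1)/2)·√(kγ(m+n)^{γ−1}) < 0` for `m, n > 0`. -/
theorem first_field_genuinely_nonlinear (k γ : ℝ) (hk : 0 < k) (hγ : 1 < γ)
    (lam₁ : ℝ × ℝ × ℝ → ℝ)
    (hlam : ∀ w : ℝ × ℝ × ℝ,
      lam₁ w = w.2.2 - Real.sqrt (k * γ * (w.1 + w.2.1) ^ (γ - 1))) :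
    ∀ m n u : ℝ, 0 < m → 0 < n →
      fderiv ℝ lam₁ (m, n, u)
          (m, n, -Real.sqrt (k * γ * (m + n) ^ (γ - 1)))
        = -(((γ + 1) / 2) * Real.sqrt (k * γ * (m + n) ^ (γ - 1))) ∧
      -(((γ + 1) / 2) * Real.sqrt (k * γ * (m + n) ^ (γ - 1))) < 0 := by
  intro m n u hm hn
  have hs : 0 < m + n := add_pos hm hn
  have hc : 0 < √(k * γ * (m + n) ^ (γ - 1)) := sqrt_pos.mpr (by positivity)
  obtain rfl : lam₁ = _ := funext hlam
  refine ⟨?_, by nlinarith⟩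
  rw [fderiv_sub_comp_add_apply (hasDerivAt_sqrt_mul_rpow (by positivity) hs)]
  field_simp
  ring
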